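/- Let α be an infinite ordinal and β a nonzero ordinal with β ≤ |α| (the cardinality of α, regarded as an initial ordinal), X a nonempty set, and τ a nonempty family of subsets of X. Then the following are equivalent: (1) (X, τ) is [β, |α|]-compact; (2) (X, τ) is [β, α′]-compact for every ordinal α′ with β ≤ α′ < |α|⁺; (3) (X, τ) is [β, α]-compact. In particular, for infinite cardinals μ ≤ λ, [μ, λ]-compactness is equivalent to [μ, α′]-compactness for every α′ < λ⁺. -/

import Mathlib

/-!
Shrinking the index ordinal from `α` to `0 < γ ≤ α` preserves `[β, ·]`-compactness: the indices
in `[γ, α)` are sent to `0`, which trades an index of the subcover above `γ` for the index `0`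
in front, and `1 + ξ ≤ ξ + 1` shows that the order type does not grow. For `α'` with
`|α'| ≤ κ = |α|`, pull a cover back along a surjection `κ → α'`; its subcover is indexed by a set
`S ⊆ α'` with `|S| < κ`, so its order type is below `κ`, and the cover restricted to `S`,
reindexed by that order type, is handled by shrinking.
-/

open Ordinal Set Cardinal

/-- The order type of a set of ordinals, under the induced order: the unique ordinal `o`
such that `S` with the induced order is order-isomorphic to `Set.Iio o`. -/
noncomputable def otype (S : Set Ordinal) : Ordinal :=
  sInf {o : Ordinal | Nonempty (S ≃o Set.Iio o)}

/-- `(X, τ)` is `[β, α]`-compact: every `α`-indexed cover of `X` by members of `τ`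
has a subcover indexed by a subset of `α` of order type `< β`. -/
def OrdCompact (β α : Ordinal) (X : Type*) (τ : Set (Set X)) : Prop :=
  ∀ O : Ordinal → Set X,
    (∀ δ < α, O δ ∈ τ) →
    (⋃ δ ∈ Set.Iio α, O δ) = Set.univ →
    ∃ H ⊆ Set.Iio α, otype H < β ∧ (⋃ δ ∈ H, O δ) = Set.univ

universe u v

theorem Ordinal.one_add_le_add_one (a : Ordinal) : 1 + a ≤ a + 1 := by
  rcases lt_or_ge a ω with ha | ha
  · obtain ⟨n, rfl⟩ := lt_omega0.1 ha
    rw [← Nat.cast_one, ← Nat.cast_add, ← Nat.cast_add, Nat.add_comm]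
  · rw [one_add_of_omega0_le ha]
    exact le_self_add

section OrderType

variable {S T : Set Ordinal.{u}}

theorem nonempty_orderIso_Iio_iff {o : Ordinal.{u}} :
    Nonempty (S ≃o Iio o) ↔ typeLT S = lift.{u + 1, u} o := by
  rw [← type_lt_Iio, type_eq]
  exact ⟨fun ⟨e⟩ => ⟨e.toRelIsoLT⟩, fun ⟨e⟩ => ⟨.ofRelIsoLT e⟩⟩

theorem lift_otype (hS : BddAbove S) : lift.{u + 1, u} (otype.{u, u} S) = typeLT S := by
  obtain ⟨a, ha⟩ := hS
  have hle : typeLT S ≤ lift.{u + 1, u} (Order.succ a) := by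
    rw [← type_lt_Iio]
    exact (OrderEmbedding.ofStrictMono (inclusion fun x hx => Order.lt_succ_iff.2 (ha hx))
      fun _ _ h => h).ltEmbedding.ordinal_type_le
  obtain ⟨o, ho⟩ := Ordinal.mem_range_lift_of_le hle
  have hset : {o' : Ordinal | Nonempty (S ≃o Iio o')} = {o} := by
    ext o'
    rw [mem_ofPred_eq, nonempty_orderIso_Iio_iff, ← ho, Ordinal.lift_inj, mem_singleton_iff,
      eq_comm]
  rw [otype, hset, csInf_singleton, ho]

theorem otype_Iio (a : Ordinal.{u}) : otype (Iio a) = a :=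
  Ordinal.lift_inj.1 ((lift_otype bddAbove_Iio).trans (type_lt_Iio a))

theorem otype_le_otype (hT : BddAbove T) (hST : S ⊆ T) : otype.{u, u} S ≤ otype.{u, u} T := by
  rw [← Ordinal.lift_le.{u + 1}, lift_otype hT, lift_otype (hT.mono hST)]
  exact (OrderEmbedding.ofStrictMono (inclusion hST) fun _ _ h => h).ltEmbedding.ordinal_type_le

theorem otype_congr (e : S ≃o T) : otype.{u, v} S = otype.{u, v} T := by
  unfold otype
  congr 1
  ext o
  exact ⟨fun ⟨i⟩ => ⟨e.symm.trans i⟩, fun ⟨i⟩ => ⟨e.trans i⟩⟩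

theorem otype_image {f : Ordinal.{u} → Ordinal.{u}} (hf : StrictMonoOn f S) :
    otype.{u, v} (f '' S) = otype.{u, v} S :=
  (otype_congr (hf.orderIso f S)).symm

theorem lift_card_otype (hS : BddAbove S) :
    Cardinal.lift.{u + 1, u} (otype.{u, u} S).card = #S := by
  rw [lift_card, lift_otype hS, card_type]

theorem card_otype_image_le {f : Ordinal.{u} → Ordinal.{u}} (hS : BddAbove S)
    (hfS : BddAbove (f '' S)) : (otype.{u, u} (f '' S)).card ≤ (otype.{u, u} S).card := by
  rw [← Cardinal.lift_le.{u + 1}, lift_card_otype hS, lift_card_otype hfS]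
  exact mk_image_le

theorem otype_insert_zero_le {d : Ordinal.{u}} (hT : BddAbove T) (hTd : ∀ t ∈ T, t < d) :
    otype.{u, u} (insert 0 T) ≤ otype.{u, u} (insert d T) := by
  classical
  rw [← Ordinal.lift_le.{u + 1}, lift_otype (hT.insert 0), lift_otype (hT.insert d)]
  let ltUnit : PUnit.{u + 2} → PUnit → Prop := (· < ·)
  let ltT : T → T → Prop := (· < ·)
  calc typeLT ↥(insert (0 : Ordinal.{u}) T)
      ≤ type (Sum.Lex ltUnit ltT) := by
        refine (RelEmbedding.ofMonotone (r := (· < · : ↥(insert (0 : Ordinal.{u}) T) → _ → Prop))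
          (s := Sum.Lex ltUnit ltT)
          (fun x => if h : (x : Ordinal) ∈ T then .inr ⟨x, h⟩ else .inl PUnit.unit)
          fun x y hxy => ?_).ordinal_type_le
        have hxy : (x : Ordinal) < y := hxy
        have hy : (y : Ordinal) ∈ T :=
          y.2.resolve_left fun hy => not_lt_zero (hy ▸ hxy)
        by_cases hx : (x : Ordinal) ∈ T
        · simpa [hx, hy, ltT] using hxy
        · simp [hx, hy]
    _ = 1 + typeLT T := by rw [type_sum_lex, type_eq_one_of_unique ltUnit]
    _ ≤ typeLT T + 1 := one_add_le_add_one _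
    _ = type (Sum.Lex ltT ltUnit) := by rw [type_sum_lex, type_eq_one_of_unique ltUnit]
    _ ≤ typeLT ↥(insert d T) := by
        refine (RelEmbedding.ofMonotone (r := Sum.Lex ltT ltUnit)
          (s := (· < · : ↥(insert d T) → _ → Prop))
          (Sum.elim (fun t => ⟨t, mem_insert_of_mem d t.2⟩) fun _ => ⟨d, mem_insert d T⟩)
          fun x y hxy => ?_).ordinal_type_le
        cases hxy with
        | inl h => exact h
        | sep t _ => exact hTd t t.2
        | inr h => exact absurd h (lt_irrefl _)

theorem exists_strictMonoOn_image_Iio_otype (hS : BddAbove S) :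
    ∃ g : Ordinal.{u} → Ordinal.{u}, StrictMonoOn g (Iio (otype S)) ∧ g '' Iio (otype S) = S := by
  classical
  obtain ⟨e⟩ := nonempty_orderIso_Iio_iff.2 (lift_otype hS).symm
  refine ⟨fun i => if h : i ∈ Iio (otype S) then e.symm ⟨i, h⟩ else 0, fun i hi j hj hij => ?_, ?_⟩
  · simp only [dif_pos hi, dif_pos hj]
    exact e.symm.strictMono (show (⟨i, hi⟩ : Iio (otype S)) < ⟨j, hj⟩ from hij)
  · ext δ
    constructor
    · rintro ⟨i, hi, rfl⟩
      simp only [dif_pos hi]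
      exact Subtype.prop _
    · intro hδ
      refine ⟨e ⟨δ, hδ⟩, (e ⟨δ, hδ⟩).2, ?_⟩
      simp only [dif_pos (e ⟨δ, hδ⟩).2, Subtype.coe_eta, OrderIso.symm_apply_apply]

theorem exists_image_Iio_eq {a b : Ordinal.{u}} (hab : b.card ≤ a.card) (hb : 0 < b) :
    ∃ f : Ordinal.{u} → Ordinal.{u}, f '' Iio a = Iio b := by
  classical
  obtain ⟨e⟩ : #(Iio b) ≤ #(Iio a) := by
    rwa [Cardinal.mk_Iio_ordinal, Cardinal.mk_Iio_ordinal, Cardinal.lift_le]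
  have : Nonempty (Iio b) := ⟨⟨0, hb⟩⟩
  refine ⟨fun δ => if h : δ ∈ Iio a then (Function.invFun e ⟨δ, h⟩ : Iio b) else 0, ?_⟩
  ext x
  constructor
  · rintro ⟨δ, hδ, rfl⟩
    simp only [dif_pos hδ]
    exact Subtype.prop _
  · intro hx
    obtain ⟨y, hy⟩ := Function.invFun_surjective e.injective ⟨x, hx⟩
    exact ⟨y, y.2, by simp only [dif_pos y.2, hy]⟩

end OrderType

namespace OrdCompact

variable {β α γ : Ordinal.{u}} {X : Type v} {τ : Set (Set X)}

theorem of_lt (h : α < β) : OrdCompact β α X τ :=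
  fun _ _ hcov => ⟨Iio α, subset_rfl, (otype_Iio α).trans_lt h, hcov⟩

theorem of_le (hc : OrdCompact β α X τ) (hγ : 0 < γ) (hγα : γ ≤ α) : OrdCompact β γ X τ := by
  classical
  intro O hO hcov
  let O' : Ordinal → Set X := fun δ => if δ < γ then O δ else O 0
  have hO' : ∀ δ < α, O' δ ∈ τ := fun δ _ => by
    by_cases hδ : δ < γ
    · simpa [O', hδ] using hO δ hδ
    · simpa [O', hδ] using hO 0 hγ
  have hcov' : ⋃ δ ∈ Iio α, O' δ = Set.univ := eq_univ_of_univ_subset <| hcov ▸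
    iUnion₂_subset fun δ hδ => by
      simpa [O', mem_Iio.1 hδ] using subset_biUnion_of_mem (u := O') (Iio_subset_Iio hγα hδ)
  obtain ⟨H, hHα, hHβ, hHcov⟩ := hc O' hO' hcov'
  have hHbdd : BddAbove H := bddAbove_Iio.mono hHα
  by_cases hHγ : H ⊆ Iio γ
  · refine ⟨H, hHγ, hHβ, eq_univ_of_univ_subset <| hHcov ▸ iUnion₂_subset fun δ hδ => ?_⟩
    simpa [O', mem_Iio.1 (hHγ hδ)] using subset_biUnion_of_mem (u := O) hδ
  obtain ⟨d, hdH, hdγ⟩ := not_subset.1 hHγ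
  refine ⟨insert 0 (H ∩ Iio γ), insert_subset hγ inter_subset_right, ?_, ?_⟩
  · calc otype (insert 0 (H ∩ Iio γ))
        ≤ otype (insert d (H ∩ Iio γ)) :=
          otype_insert_zero_le (hHbdd.mono inter_subset_left)
            fun t ht => ht.2.trans_le (not_lt.1 hdγ)
      _ ≤ otype H := otype_le_otype hHbdd (insert_subset hdH inter_subset_left)
      _ < β := hHβ
  · refine eq_univ_of_univ_subset <| hHcov ▸ iUnion₂_subset fun δ hδ => ?_
    by_cases hδγ : δ < γ
    · simpa [O', hδγ] using
        subset_biUnion_of_mem (u := O) (mem_insert_of_mem 0 (show δ ∈ H ∩ Iio γ from ⟨hδ, hδγ⟩))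
    · simp [O', hδγ]

theorem exists_subcover {S : Set Ordinal.{u}} (hS : BddAbove S)
    (hc : OrdCompact β (otype.{u, u} S) X τ)
    {O : Ordinal.{u} → Set X} (hO : ∀ δ ∈ S, O δ ∈ τ) (hcov : ⋃ δ ∈ S, O δ = Set.univ) :
    ∃ H ⊆ S, otype H < β ∧ ⋃ δ ∈ H, O δ = Set.univ := by
  obtain ⟨g, hg, hgS⟩ := exists_strictMonoOn_image_Iio_otype hS
  obtain ⟨G, hGS, hGβ, hGcov⟩ := hc (O ∘ g) (fun i hi => hO _ (hgS ▸ mem_image_of_mem g hi))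
    (by rwa [← hgS, biUnion_image] at hcov)
  exact ⟨g '' G, hgS ▸ image_mono hGS, by rwa [otype_image (hg.mono hGS)],
    by rwa [biUnion_image]⟩

theorem of_card_le {c : Cardinal.{u}} (hc : OrdCompact β c.ord X τ) (hβ : β ≤ c.ord)
    (hα : α.card ≤ c) (hα0 : 0 < α) : OrdCompact β α X τ := by
  intro O hO hcov
  obtain ⟨b, hb⟩ := exists_image_Iio_eq (a := c.ord) (by rwa [card_ord]) hα0
  obtain ⟨K, hKc, hKβ, hKcov⟩ := hc (O ∘ b)
    (fun δ hδ => hO _ (mem_Iio.1 (hb ▸ mem_image_of_mem b hδ)))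
    (by rwa [← hb, biUnion_image] at hcov)
  have hSα : b '' K ⊆ Iio α := hb ▸ image_mono hKc
  have hSc : otype (b '' K) < c.ord := lt_ord.2 <|
    (card_otype_image_le (bddAbove_Iio.mono hKc) (bddAbove_Iio.mono hSα)).trans_lt
      (lt_ord.1 (hKβ.trans_le hβ))
  have hcS : OrdCompact β (otype (b '' K)) X τ := by
    rcases eq_zero_or_pos (otype (b '' K)) with h0 | hpos
    · exact of_lt (h0 ▸ zero_le.trans_lt hKβ)
    · exact hc.of_le hpos hSc.le
  obtain ⟨H, hHS, hHβ, hHcov⟩ := hcS.exists_subcover (bddAbove_Iio.mono hSα)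
    (fun δ hδ => hO δ (hSα hδ)) (by rwa [biUnion_image])
  exact ⟨H, hHS.trans hSα, hHβ, hHcov⟩

end OrdCompact

open OrdCompact in
theorem ordCompact_initial_general {α β : Ordinal} (hβ : β ≠ 0)
    (hβα : β ≤ α.card.ord)
    {X : Type*} {τ : Set (Set X)} :
    ((OrdCompact β α.card.ord X τ ↔
        ∀ α' : Ordinal, β ≤ α' → α' < (Order.succ α.card).ord → OrdCompact β α' X τ) ∧
      (OrdCompact β α.card.ord X τ ↔ OrdCompact β α X τ)) ∧
    (∀ μ lam : Cardinal, ℵ₀ ≤ μ → μ ≤ lam →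
      (OrdCompact μ.ord lam.ord X τ ↔
        ∀ α' : Ordinal, α' < (Order.succ lam).ord → OrdCompact μ.ord α' X τ)) := by
  have hβpos : 0 < β := pos_iff_ne_zero.2 hβ
  have up : OrdCompact β α.card.ord X τ →
      ∀ α' : Ordinal, β ≤ α' → α' < (Order.succ α.card).ord → OrdCompact β α' X τ :=
    fun h α' hβα' hα' => h.of_card_le hβα (card_le_iff.2 hα') (hβpos.trans_le hβα')
  refine ⟨⟨⟨up, fun h => h _ hβα (ord_lt_ord.2 (Order.lt_succ _))⟩,
    fun h => up h α (hβα.trans (ord_card_le α)) (lt_ord_succ_card α),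
    fun h => h.of_le (hβpos.trans_le hβα) (ord_card_le α)⟩, fun μ lam hμ hμlam => ⟨?_, ?_⟩⟩
  · intro h α' hα'
    rcases lt_or_ge α' μ.ord with hlt | hge
    · exact of_lt hlt
    · exact h.of_card_le (ord_le_ord.2 hμlam) (card_le_iff.2 hα')
        ((ord_pos.2 (aleph0_pos.trans_le hμ)).trans_le hge)
  · exact fun h => h _ (ord_lt_ord.2 (Order.lt_succ _))

/-- Corollary 2.8: for `α` infinite and `0 < β ≤ |α|`, the properties
`[β, |α|]`-compactness, `[β, α']`-compactness for all `β ≤ α' < |α|⁺`, and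
`[β, α]`-compactness are equivalent. In particular, for infinite cardinals `μ ≤ λ`,
`[μ, λ]`-compactness is equivalent to `[μ, α']`-compactness for every `α' < λ⁺`. -/
theorem ordCompact_initial {α β : Ordinal} (hα : ω ≤ α) (hβ : β ≠ 0)
    (hβα : β ≤ α.card.ord)
    {X : Type*} (hX : Nonempty X) {τ : Set (Set X)} (hτ : τ.Nonempty) :
    ((OrdCompact β α.card.ord X τ ↔
        ∀ α' : Ordinal, β ≤ α' → α' < (Order.succ α.card).ord → OrdCompact β α' X τ) ∧
      (OrdCompact β α.card.ord X τ ↔ OrdCompact β α X τ)) ∧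
    (∀ μ lam : Cardinal, ℵ₀ ≤ μ → μ ≤ lam →
      (OrdCompact μ.ord lam.ord X τ ↔
        ∀ α' : Ordinal, α' < (Order.succ lam).ord → OrdCompact μ.ord α' X τ)) :=
  ordCompact_initial_general hβ hβα
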